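/- arXiv:2303.17700 — 2 statements merged into one kernel-verified Lean document; each statement's English description precedes it below -/
import Mathlib

section
/- For every vector φ ∈ ℂ², the identity φ ⊗ Φ⁺ = (1/2)·Σ_{x,z ∈ ZMod 2} ((Zᶻ·Xˣ ⊗ id)Φ⁺) ⊗ (Xˣ·Zᶻ·φ) holds in ℂ² ⊗ ℂ² ⊗ ℂ², where matrix powers use the natural-number representatives of x,z ∈ ZMod 2. (This is the computational content of the single-qubit teleportation protocol using Ising anyons: measuring the first two tensor factors in the basis {(ZᶻXˣ⊗id)Φ⁺} with outcome (x,z) leaves the third factor in state XˣZᶻφ, each outcome occurring with probability 1/4 when φ is a unit vector.) -/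
noncomputable section
open Matrix

/-- The Pauli-X matrix. -/
def PX : Matrix (Fin 2) (Fin 2) ℂ := !![0, 1; 1, 0]

/-- The Pauli-Z matrix. -/
def PZ : Matrix (Fin 2) (Fin 2) ℂ := !![1, 0; 0, -1]

/-- The standard basis of `ℂ²`. -/
def e (i : Fin 2) : Fin 2 → ℂ := Pi.single i 1

/-- Tensor product of two vectors of `ℂ²`, as a vector of `ℂ² ⊗ ℂ²`. -/
def tensQQ (v w : Fin 2 → ℂ) : Fin 2 × Fin 2 → ℂ := fun p => v p.1 * w p.2

/-- Tensor product of a 1-qubit vector (first factor) with a 2-qubit vector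
(second and third factors), as a vector of `ℂ² ⊗ ℂ² ⊗ ℂ²`. -/
def tensQ_QQ (v : Fin 2 → ℂ) (w : Fin 2 × Fin 2 → ℂ) : Fin 2 × Fin 2 × Fin 2 → ℂ :=
  fun p => v p.1 * w p.2

/-- Tensor product of a 2-qubit vector (first and second factors) with a 1-qubit
vector (third factor), as a vector of `ℂ² ⊗ ℂ² ⊗ ℂ²`. -/
def tensQQ_Q (w : Fin 2 × Fin 2 → ℂ) (v : Fin 2 → ℂ) : Fin 2 × Fin 2 × Fin 2 → ℂ :=
  fun p => w (p.1, p.2.1) * v p.2.2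

/-- The action of `A ⊗ id` on `ℂ² ⊗ ℂ²`. -/
def actL (A : Matrix (Fin 2) (Fin 2) ℂ) (w : Fin 2 × Fin 2 → ℂ) : Fin 2 × Fin 2 → ℂ :=
  fun p => ∑ k, A p.1 k * w (k, p.2)

/-- The ebit (maximally entangled 2-qubit state) `Φ⁺ = (e₀⊗e₀ + e₁⊗e₁)/√2`. -/
def BellPhi : Fin 2 × Fin 2 → ℂ :=
  ((Real.sqrt 2 : ℂ))⁻¹ • (tensQQ (e 0) (e 0) + tensQQ (e 1) (e 1))

/-!
Since `Φ⁺(k, b) = δ_{kb}/√2`, the state `(A ⊗ id)Φ⁺` has entries `A_{ab}/√2`. Comparing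
entries, the identity then reduces to the completeness relation
`Σ_{x,z} (ZᶻXˣ)_{ab} (XˣZᶻ)_{cd} = 2 δ_{ad} δ_{bc}`, which expresses that the matrices
`ZᶻXˣ/√2` form an orthonormal basis of `M₂(ℂ)` for the Hilbert–Schmidt inner product, with
`XˣZᶻ = (ZᶻXˣ)ᴴ`.
-/

theorem BellPhi_apply (a b : Fin 2) :
    BellPhi (a, b) = (Real.sqrt 2 : ℂ)⁻¹ * if a = b then 1 else 0 := by
  fin_cases a <;> fin_cases b <;> simp [BellPhi, tensQQ, e]

theorem actL_BellPhi_apply (A : Matrix (Fin 2) (Fin 2) ℂ) (a b : Fin 2) :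
    actL A BellPhi (a, b) = (Real.sqrt 2 : ℂ)⁻¹ * A a b := by
  simp [actL, BellPhi_apply, mul_comm]

theorem tensQ_QQ_BellPhi_eq_sum_of_completeness {ι : Type*} [Fintype ι]
    (A B : ι → Matrix (Fin 2) (Fin 2) ℂ)
    (hAB : ∀ a b c d, ∑ i, A i a b * B i c d = if a = d ∧ b = c then 2 else 0)
    (φ : Fin 2 → ℂ) :
    tensQ_QQ φ BellPhi =
      (1 / 2 : ℂ) • ∑ i, tensQQ_Q (actL (A i) BellPhi) ((B i).mulVec φ) := by
  funext ⟨a, b, c⟩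
  simp only [tensQ_QQ, tensQQ_Q, Finset.sum_apply, Pi.smul_apply, smul_eq_mul,
    actL_BellPhi_apply, BellPhi_apply, mulVec, dotProduct]
  symm
  calc (1 / 2 : ℂ) * ∑ i, (Real.sqrt 2 : ℂ)⁻¹ * A i a b * ∑ d, B i c d * φ d
      = (1 / 2 : ℂ) * (Real.sqrt 2 : ℂ)⁻¹ * ∑ d, (∑ i, A i a b * B i c d) * φ d := by
        simp only [Finset.mul_sum, Finset.sum_mul]
        rw [Finset.sum_comm]
        ring_nf
    _ = (1 / 2 : ℂ) * (Real.sqrt 2 : ℂ)⁻¹ * ∑ d, (if a = d ∧ b = c then 2 else 0) * φ d := by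
        simp only [hAB]
    _ = φ a * ((Real.sqrt 2 : ℂ)⁻¹ * if b = c then 1 else 0) := by
        by_cases hbc : b = c
        · simp [hbc]
          ring
        · simp [hbc]

theorem pauli_completeness (a b c d : Fin 2) :
    ∑ p : ZMod 2 × ZMod 2,
        (PZ ^ p.2.val * PX ^ p.1.val) a b * (PX ^ p.1.val * PZ ^ p.2.val) c d =
      if a = d ∧ b = c then 2 else 0 := by
  change ∑ p : Fin 2 × Fin 2, _ = _
  simp only [Fintype.sum_prod_type, Fin.sum_univ_two, ZMod.val, Fin.val_zero, Fin.val_one,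
    pow_zero, pow_one, one_mul, mul_one]
  fin_cases a <;> fin_cases b <;> fin_cases c <;> fin_cases d <;>
    norm_num [PX, PZ, Matrix.mul_apply]

/-- Single-qubit teleportation identity:
`φ ⊗ Φ⁺ = (1/2)·Σ_{x,z} ((Zᶻ Xˣ ⊗ id) Φ⁺) ⊗ (Xˣ Zᶻ φ)`. -/
theorem teleportation_qubit (φ : Fin 2 → ℂ) :
    tensQ_QQ φ BellPhi =
      (1 / 2 : ℂ) • ∑ x : ZMod 2, ∑ z : ZMod 2,
        tensQQ_Q (actL (PZ ^ z.val * PX ^ x.val) BellPhi)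
          ((PX ^ x.val * PZ ^ z.val).mulVec φ) := by
  rw [← Fintype.sum_prod_type']
  exact tensQ_QQ_BellPhi_eq_sum_of_completeness _ _ pauli_completeness φ
end
end

section
/- For p ≥ 1 and x : {1,…,p} → ZMod 2 with x_{p+1} := 0, the product of vertex operators satisfies ∏_{j=1}^{p} v_j^{x_j} = ⨂_{k=0}^{p} X^{c_k}, where c_0 = x_1 and c_k = x_k + x_{k+1} (addition in ZMod 2) for 1 ≤ k ≤ p. (This is the content of the 'noughts and crosses' model: applying the vertex operators prescribed by Alice's measurement outcomes produces exactly the pattern of X-errors with exponents x_j + x_{j+1}, together with an X^{x_1} on the ancillary site 0.) -/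
/-!
Every operator involved is an X-type Pauli string `X^c = ⨂_k X^{c_k}` with `c ∈ (ZMod 2)^{p+1}`,
and since `X² = 1` the map `c ↦ X^c` turns addition into matrix multiplication. The factor
`v_j^{x_j}` is `X^c` for `c = x_j (e_{j-1} + e_j)`, so the product is `X^c` with
`c = ∑_j x_j e_{j-1} + ∑_j x_j e_j`, whose `k`-th coordinate is `x_{k+1} + x_k`: the first sum
reaches `k = p` only because `x_{p+1} = 0`, and the second has no term at `k = 0`.
-/

noncomputable section
open Matrix
open scoped Classical

/-- The operator on `(ℂ²)^{⊗(p+1)}` (sites `0,…,p`) acting as the 2×2 matrix `A`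
on site `k` and as the identity elsewhere. -/
def site (p : ℕ) (A : Matrix (Fin 2) (Fin 2) ℂ) (k : Fin (p + 1)) :
    Matrix (Fin (p + 1) → Fin 2) (Fin (p + 1) → Fin 2) ℂ :=
  fun s t => (if ∀ j, j ≠ k → s j = t j then 1 else 0) * A (s k) (t k)

/-- The tensor (Kronecker) product `⨂_{k=0}^{p} M k` of single-site operators,
as an operator on `(ℂ²)^{⊗(p+1)}`. -/
def kron (p : ℕ) (M : Fin (p + 1) → Matrix (Fin 2) (Fin 2) ℂ) :
    Matrix (Fin (p + 1) → Fin 2) (Fin (p + 1) → Fin 2) ℂ :=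
  fun s t => ∏ k, M k (s k) (t k)

/-- The vertex operator `v_j := X_{j-1} · X_j` for `1 ≤ j ≤ p`; here `j : Fin p`
represents the vertex `j+1 ∈ {1,…,p}`, acting on sites `j` and `j+1`. -/
def vop (p : ℕ) (j : Fin p) :
    Matrix (Fin (p + 1) → Fin 2) (Fin (p + 1) → Fin 2) ℂ :=
  site p PX j.castSucc * site p PX j.succ

lemma PX_mul_self : PX * PX = 1 := by
  rw [PX, mul_fin_two, one_fin_two]
  norm_num

lemma PX_pow_val_add (a b : ZMod 2) : PX ^ (a + b).val = PX ^ a.val * PX ^ b.val := by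
  rw [ZMod.val_add, ← pow_eq_pow_mod _ (by rw [sq, PX_mul_self]), pow_add]

section Kron

variable {p : ℕ}

lemma kron_mul (M N : Fin (p + 1) → Matrix (Fin 2) (Fin 2) ℂ) :
    kron p M * kron p N = kron p (fun k => M k * N k) := by
  ext s t
  simp only [kron, mul_apply, ← Finset.prod_mul_distrib, Fintype.prod_sum]

lemma kron_one : kron p (fun _ => (1 : Matrix (Fin 2) (Fin 2) ℂ)) = 1 := by
  ext s t
  simp only [kron, one_apply, Finset.prod_boole, funext_iff, Finset.mem_univ, true_implies]

lemma site_eq_kron (A : Matrix (Fin 2) (Fin 2) ℂ) (k : Fin (p + 1)) :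
    site p A k = kron p (fun i => if i = k then A else 1) := by
  ext s t
  have h_off : ∀ i ∈ Finset.univ \ {k}, (if i = k then A else 1) (s i) (t i) =
      (1 : Matrix (Fin 2) (Fin 2) ℂ) (s i) (t i) := fun i hi => by
    rw [if_neg (by simpa using hi)]
  rw [site, kron, Finset.prod_eq_mul_prod_sdiff_singleton_of_mem (Finset.mem_univ k), if_pos rfl,
    Finset.prod_congr rfl h_off, mul_comm]
  simp [one_apply, Finset.prod_boole]

end Kron

def pauliXString (p : ℕ) (c : Fin (p + 1) → ZMod 2) :
    Matrix (Fin (p + 1) → Fin 2) (Fin (p + 1) → Fin 2) ℂ :=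
  kron p (fun k => PX ^ (c k).val)

section PauliXString

variable {p : ℕ}

lemma pauliXString_add (c d : Fin (p + 1) → ZMod 2) :
    pauliXString p (c + d) = pauliXString p c * pauliXString p d := by
  simp only [pauliXString, kron_mul, Pi.add_apply, PX_pow_val_add]

lemma pauliXString_zero : pauliXString p 0 = 1 := by
  simp only [pauliXString, Pi.zero_apply, ZMod.val_zero, pow_zero, kron_one]

lemma pauliXString_pow_val (c : Fin (p + 1) → ZMod 2) (a : ZMod 2) :
    pauliXString p c ^ a.val = pauliXString p (a • c) := by
  have h_nsmul : ∀ n : ℕ, pauliXString p c ^ n = pauliXString p (n • c) := by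
    intro n
    induction n with
    | zero => rw [pow_zero, zero_smul, pauliXString_zero]
    | succ n ih => rw [pow_succ, ih, succ_nsmul, pauliXString_add]
  rw [h_nsmul, ← Nat.cast_smul_eq_nsmul (ZMod 2), ZMod.natCast_zmod_val]

lemma prod_ofFn_pauliXString {n : ℕ} (c : Fin n → Fin (p + 1) → ZMod 2) :
    (List.ofFn fun j => pauliXString p (c j)).prod = pauliXString p (∑ j, c j) := by
  induction n with
  | zero => rw [List.ofFn_zero, List.prod_nil, Finset.univ_eq_empty, Finset.sum_empty,
      pauliXString_zero]
  | succ n ih => rw [List.ofFn_succ, List.prod_cons, ih, Fin.sum_univ_succ, pauliXString_add]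

lemma site_PX_eq_pauliXString (k : Fin (p + 1)) :
    site p PX k = pauliXString p (Pi.single k 1) := by
  rw [site_eq_kron, pauliXString]
  congr 1
  ext1 i
  by_cases hi : i = k
  · rw [hi, if_pos rfl, Pi.single_eq_same]
    exact (pow_one PX).symm
  · simp [hi]

lemma vop_pow_val (j : Fin p) (a : ZMod 2) :
    vop p j ^ a.val = pauliXString p (Pi.single j.castSucc a + Pi.single j.succ a) := by
  rw [vop, site_PX_eq_pauliXString, site_PX_eq_pauliXString, ← pauliXString_add,
    pauliXString_pow_val, smul_add, ← Pi.single_smul, ← Pi.single_smul, smul_eq_mul, mul_one]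

end PauliXString

section SingleSums

variable {M : Type*} [AddCommMonoid M] {p : ℕ}

lemma sum_single_castSucc (a : Fin (p + 1) → M) (ha : a (Fin.last p) = 0) :
    ∑ j : Fin p, Pi.single j.castSucc (a j.castSucc) = a := by
  conv_rhs => rw [← Finset.univ_sum_single a, Fin.sum_univ_castSucc, ha, Pi.single_zero, add_zero]

lemma sum_single_succ (a : Fin (p + 1) → M) (ha : a 0 = 0) :
    ∑ j : Fin p, Pi.single j.succ (a j.succ) = a := by
  conv_rhs => rw [← Finset.univ_sum_single a, Fin.sum_univ_succ, ha, Pi.single_zero, zero_add]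

end SingleSums

theorem vertex_operators_product_general (p : ℕ) (x : ℕ → ZMod 2)
    (hx : x (p + 1) = 0) :
    (List.ofFn fun j : Fin p => vop p j ^ (x ((j : ℕ) + 1)).val).prod =
      kron p (fun k =>
        PX ^ (if (k : ℕ) = 0 then x 1 else x (k : ℕ) + x ((k : ℕ) + 1)).val) := by
  have h_castSucc : ∑ j : Fin p, Pi.single j.castSucc (x (j + 1)) =
      fun k : Fin (p + 1) => x (k + 1) :=
    sum_single_castSucc (fun k : Fin (p + 1) => x (k + 1)) hx
  have h_succ : ∑ j : Fin p, Pi.single j.succ (x (j + 1)) =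
      fun k : Fin (p + 1) => if (k : ℕ) = 0 then 0 else x k := by
    refine (Finset.sum_congr rfl fun j _ => ?_).trans (sum_single_succ _ (if_pos rfl))
    rw [Fin.val_succ, if_neg (Nat.succ_ne_zero _)]
  simp only [vop_pow_val, prod_ofFn_pauliXString, Finset.sum_add_distrib, h_castSucc, h_succ]
  refine congrArg (kron p) (funext fun k => ?_)
  dsimp only [Pi.add_apply]
  split_ifs with hk
  · rw [add_zero, hk]
  · rw [add_comm]

/-- Noughts-and-crosses model: for `x : {1,…,p} → ZMod 2` with `x_{p+1} := 0`,
`∏_{j=1}^{p} v_j^{x_j} = ⨂_{k=0}^{p} X^{c_k}` where `c_0 = x_1` and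
`c_k = x_k + x_{k+1}` for `1 ≤ k ≤ p`. -/
theorem vertex_operators_product (p : ℕ) (hp : 1 ≤ p) (x : ℕ → ZMod 2)
    (hx : x (p + 1) = 0) :
    (List.ofFn fun j : Fin p => vop p j ^ (x ((j : ℕ) + 1)).val).prod =
      kron p (fun k =>
        PX ^ (if (k : ℕ) = 0 then x 1 else x (k : ℕ) + x ((k : ℕ) + 1)).val) :=
  vertex_operators_product_general p x hx
end
end
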